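/- Let w = (1/8)I + (η_AB/4)(V_{AB} − I/2) + (η_AC/4)(V_{AC} − I/2) + (η_BC/4)(V_{BC} − I/2) on (C²)^{⊗3} with η_AB = η_AC = η_BC = η. Then the expectation of w in the product state |ψ⟩ = |θ=0⟩ ⊗ |θ=2π/3⟩ ⊗ |θ=4π/3⟩, where |θ⟩ = cos θ |0⟩ + sin θ |1⟩, equals (1/8)(1 − (3/2)η); in particular it is nonnegative iff η ≤ 2/3. -/

import Mathlib

open Matrix BigOperators
open scoped ComplexOrder

abbrev Tri := Fin 2 × Fin 2 × Fin 2

/-- Swap of qubits A and B in `(C²)^{⊗3}`. -/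
noncomputable def VAB : Matrix Tri Tri ℂ :=
  fun p q => if p.1 = q.2.1 ∧ p.2.1 = q.1 ∧ p.2.2 = q.2.2 then 1 else 0

/-- Swap of qubits A and C in `(C²)^{⊗3}`. -/
noncomputable def VAC : Matrix Tri Tri ℂ :=
  fun p q => if p.1 = q.2.2 ∧ p.2.2 = q.1 ∧ p.2.1 = q.2.1 then 1 else 0

/-- Swap of qubits B and C in `(C²)^{⊗3}`. -/
noncomputable def VBC : Matrix Tri Tri ℂ :=
  fun p q => if p.2.1 = q.2.2 ∧ p.2.2 = q.2.1 ∧ p.1 = q.1 then 1 else 0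

/-- The real unit vector `cos θ |0⟩ + sin θ |1⟩` in `C²`. -/
noncomputable def blochVec (θ : ℝ) : Fin 2 → ℂ :=
  fun i => if i = 0 then (Real.cos θ : ℂ) else (Real.sin θ : ℂ)

/-- The product vector `|θ=0⟩ ⊗ |θ=2π/3⟩ ⊗ |θ=4π/3⟩`. -/
noncomputable def prodVec : Tri → ℂ :=
  fun p => blochVec 0 p.1 * blochVec (2 * Real.pi / 3) p.2.1 * blochVec (4 * Real.pi / 3) p.2.2

/-- The symmetric tripartite Werner operator with `η_AB = η_AC = η_BC = η`. -/
noncomputable def wEta (η : ℝ) : Matrix Tri Tri ℂ :=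
  (1 / 8 : ℝ) • (1 : Matrix Tri Tri ℂ)
    + (η / 4) • (VAB - (1 / 2 : ℝ) • (1 : Matrix Tri Tri ℂ))
    + (η / 4) • (VAC - (1 / 2 : ℝ) • (1 : Matrix Tri Tri ℂ))
    + (η / 4) • (VBC - (1 / 2 : ℝ) • (1 : Matrix Tri Tri ℂ))

/-!
Each swap operator permutes the tensor factors of a product vector, so in a product of unit
vectors `⟨V_XY⟩ = |⟨x|y⟩|²`, which for Bloch vectors is `cos² (θ_X - θ_Y)`. The three angles
`0, 2π/3, 4π/3` differ pairwise by `±2π/3` or `±4π/3`, where `cos² = 1/4`, so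
`⟨w⟩ = 1/8 + (η/4)(3/4 - 3/2)`.
-/

def tripleProd (u v w : Fin 2 → ℂ) : Tri → ℂ :=
  fun p => u p.1 * v p.2.1 * w p.2.2

lemma star_tripleProd_dotProduct (u v w u' v' w' : Fin 2 → ℂ) :
    star (tripleProd u v w) ⬝ᵥ tripleProd u' v' w' =
      (star u ⬝ᵥ u') * (star v ⬝ᵥ v') * (star w ⬝ᵥ w') := by
  simp only [dotProduct, tripleProd, Pi.star_apply, star_mul', Fintype.sum_prod_type,
    Fin.sum_univ_two]
  ring

lemma sum_ite_one_mul_of_iff_eq {P : Tri → Prop} [DecidablePred P] {t : Tri}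
    (hP : ∀ q, P q ↔ t = q) (f : Tri → ℂ) :
    ∑ q, (if P q then 1 else 0) * f q = f t := by
  simp only [hP, ite_mul, one_mul, zero_mul, Finset.sum_ite_eq, Finset.mem_univ, if_true]

lemma VAB_mulVec_tripleProd (u v w : Fin 2 → ℂ) :
    VAB *ᵥ tripleProd u v w = tripleProd v u w := by
  ext ⟨a, b, c⟩
  simp only [mulVec, dotProduct, VAB]
  rw [sum_ite_one_mul_of_iff_eq (t := (b, a, c))
    (by rintro ⟨x, y, z⟩; simp only [Prod.mk.injEq]; tauto)]
  simp only [tripleProd]; ring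

lemma VAC_mulVec_tripleProd (u v w : Fin 2 → ℂ) :
    VAC *ᵥ tripleProd u v w = tripleProd w v u := by
  ext ⟨a, b, c⟩
  simp only [mulVec, dotProduct, VAC]
  rw [sum_ite_one_mul_of_iff_eq (t := (c, b, a))
    (by rintro ⟨x, y, z⟩; simp only [Prod.mk.injEq]; tauto)]
  simp only [tripleProd]; ring

lemma VBC_mulVec_tripleProd (u v w : Fin 2 → ℂ) :
    VBC *ᵥ tripleProd u v w = tripleProd u w v := by
  ext ⟨a, b, c⟩
  simp only [mulVec, dotProduct, VBC]
  rw [sum_ite_one_mul_of_iff_eq (t := (a, c, b))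
    (by rintro ⟨x, y, z⟩; simp only [Prod.mk.injEq]; tauto)]
  simp only [tripleProd]; ring

lemma star_tripleProd_dotProduct_wEta_mulVec {u v w : Fin 2 → ℂ} (hu : star u ⬝ᵥ u = 1)
    (hv : star v ⬝ᵥ v = 1) (hw : star w ⬝ᵥ w = 1) (η : ℝ) :
    star (tripleProd u v w) ⬝ᵥ wEta η *ᵥ tripleProd u v w =
      1 / 8 + η / 4 * ((star u ⬝ᵥ v) * (star v ⬝ᵥ u) + (star u ⬝ᵥ w) * (star w ⬝ᵥ u)
        + (star v ⬝ᵥ w) * (star w ⬝ᵥ v) - 3 / 2) := by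
  simp only [wEta, add_mulVec, sub_mulVec, smul_mulVec, one_mulVec, VAB_mulVec_tripleProd,
    VAC_mulVec_tripleProd, VBC_mulVec_tripleProd, dotProduct_add, dotProduct_sub,
    dotProduct_smul, star_tripleProd_dotProduct, hu, hv, hw, Complex.real_smul]
  push_cast
  ring

lemma star_blochVec_dotProduct (a b : ℝ) :
    star (blochVec a) ⬝ᵥ blochVec b = (Real.cos (a - b) : ℂ) := by
  simp only [dotProduct, Fin.sum_univ_two, blochVec, Pi.star_apply, Fin.isValue, if_pos,
    one_ne_zero, if_false, Complex.star_def, Complex.conj_ofReal, Real.cos_sub]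
  norm_cast

lemma star_blochVec_dotProduct_self (a : ℝ) : star (blochVec a) ⬝ᵥ blochVec a = 1 := by
  rw [star_blochVec_dotProduct, sub_self, Real.cos_zero, Complex.ofReal_one]

lemma star_tripleProd_blochVec_dotProduct_wEta_mulVec (a b c η : ℝ) :
    star (tripleProd (blochVec a) (blochVec b) (blochVec c)) ⬝ᵥ
        wEta η *ᵥ tripleProd (blochVec a) (blochVec b) (blochVec c) =
      ((1 / 8 + η / 4 * (Real.cos (a - b) ^ 2 + Real.cos (a - c) ^ 2 + Real.cos (b - c) ^ 2
        - 3 / 2) : ℝ) : ℂ) := by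
  rw [star_tripleProd_dotProduct_wEta_mulVec (star_blochVec_dotProduct_self a)
    (star_blochVec_dotProduct_self b) (star_blochVec_dotProduct_self c)]
  have cos_sub_comm (x y : ℝ) : Real.cos (y - x) = Real.cos (x - y) := by
    rw [← neg_sub, Real.cos_neg]
  simp only [star_blochVec_dotProduct]
  rw [cos_sub_comm a b, cos_sub_comm a c, cos_sub_comm b c]
  push_cast
  ring

lemma cos_two_pi_div_three : Real.cos (2 * Real.pi / 3) = -(1 / 2) := by
  rw [show 2 * Real.pi / 3 = Real.pi - Real.pi / 3 by ring, Real.cos_pi_sub,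
    Real.cos_pi_div_three]

lemma cos_four_pi_div_three : Real.cos (4 * Real.pi / 3) = -(1 / 2) := by
  rw [show 4 * Real.pi / 3 = Real.pi / 3 + Real.pi by ring, Real.cos_add_pi,
    Real.cos_pi_div_three]

theorem stmt17 (η : ℝ) :
    star prodVec ⬝ᵥ (wEta η) *ᵥ prodVec = (((1 / 8) * (1 - (3 / 2) * η) : ℝ) : ℂ) ∧
    (0 ≤ star prodVec ⬝ᵥ (wEta η) *ᵥ prodVec ↔ η ≤ 2 / 3) := by
  have expectation : star prodVec ⬝ᵥ (wEta η) *ᵥ prodVec =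
      (((1 / 8) * (1 - (3 / 2) * η) : ℝ) : ℂ) := by
    have hψ : prodVec = tripleProd (blochVec 0) (blochVec (2 * Real.pi / 3))
        (blochVec (4 * Real.pi / 3)) := rfl
    rw [hψ, star_tripleProd_blochVec_dotProduct_wEta_mulVec]
    have hAB : Real.cos (0 - 2 * Real.pi / 3) = -(1 / 2) := by
      rw [zero_sub, Real.cos_neg, cos_two_pi_div_three]
    have hAC : Real.cos (0 - 4 * Real.pi / 3) = -(1 / 2) := by
      rw [zero_sub, Real.cos_neg, cos_four_pi_div_three]
    have hBC : Real.cos (2 * Real.pi / 3 - 4 * Real.pi / 3) = -(1 / 2) := by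
      rw [show 2 * Real.pi / 3 - 4 * Real.pi / 3 = -(2 * Real.pi / 3) by ring, Real.cos_neg,
        cos_two_pi_div_three]
    rw [hAB, hAC, hBC]
    congr 1
    ring
  refine ⟨expectation, ?_⟩
  rw [expectation, Complex.zero_le_real]
  constructor <;> intro h <;> linarith
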